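/- arXiv:1403.2520 — 6 statements merged into one kernel-verified Lean document; each statement's English description precedes it below -/
import Mathlib

section
/- If f : ℝ → ℝ is continuously differentiable, f and f′ are square integrable on ℝ, and f(x) → 0 as |x| → ∞, then sup_{x∈ℝ} |f(x)| ≤ √2 · ‖f‖_{L²(ℝ)}^{1/2} · ‖f′‖_{L²(ℝ)}^{1/2}. -/
/-!
By the fundamental theorem of calculus and `f → 0` at `-∞`,
`f x ^ 2 = 2 ∫_{-∞}^x f f' ≤ 2 ∫ |f f'|`, and Cauchy–Schwarz bounds the last integral by
`‖f‖₂ ‖f'‖₂`; taking square roots gives the inequality.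
-/

open MeasureTheory Filter Set Topology

theorem integral_abs_mul_le_sqrt_integral_sq_mul_sqrt_integral_sq {α : Type*}
    [MeasurableSpace α] {μ : Measure α} {f g : α → ℝ} (hf : MemLp f 2 μ) (hg : MemLp g 2 μ) :
    ∫ a, |f a * g a| ∂μ ≤ √(∫ a, f a ^ 2 ∂μ) * √(∫ a, g a ^ 2 ∂μ) := by
  have hL2 {h : α → ℝ} (hh : MemLp h 2 μ) : MemLp (fun a => |h a|) (ENNReal.ofReal 2) μ := by
    simpa [Real.norm_eq_abs] using hh.norm
  have hsq (h : α → ℝ) : ∫ a, |h a| ^ (2 : ℝ) ∂μ = ∫ a, h a ^ 2 ∂μ := by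
    simp only [Real.rpow_two, sq_abs]
  simpa only [abs_mul, hsq, ← Real.sqrt_eq_rpow] using
    integral_mul_le_Lp_mul_Lq_of_nonneg Real.HolderConjugate.two_two
      (ae_of_all _ fun a => abs_nonneg (f a)) (ae_of_all _ fun a => abs_nonneg (g a)) (hL2 hf) (hL2 hg)

section VanishingAtBot

variable {f f' : ℝ → ℝ}

theorem sq_eq_two_mul_integral_Iic_mul_of_tendsto_atBot {x : ℝ}
    (hderiv : ∀ y ∈ Iic x, HasDerivAt f (f' y) y)
    (hint : IntegrableOn (fun y => f y * f' y) (Iic x)) (hbot : Tendsto f atBot (𝓝 0)) :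
    f x ^ 2 = 2 * ∫ y in Iic x, f y * f' y := by
  have hderiv_sq : ∀ y ∈ Iic x, HasDerivAt (fun z => f z ^ 2) (2 * (f y * f' y)) y := fun y hy => by
    simpa [mul_comm, mul_assoc, mul_left_comm] using (hderiv y hy).fun_pow 2
  rw [← integral_const_mul, integral_Iic_of_hasDerivAt_of_tendsto' hderiv_sq (hint.const_mul 2)
    (by simpa using hbot.pow 2), sub_zero]

theorem sq_le_two_mul_integral_abs_mul_of_tendsto_atBot
    (hderiv : ∀ y, HasDerivAt f (f' y) y) (hint : Integrable (fun y => f y * f' y))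
    (hbot : Tendsto f atBot (𝓝 0)) (x : ℝ) :
    f x ^ 2 ≤ 2 * ∫ y, |f y * f' y| := by
  rw [sq_eq_two_mul_integral_Iic_mul_of_tendsto_atBot (fun y _ => hderiv y) hint.integrableOn hbot]
  gcongr
  calc ∫ y in Iic x, f y * f' y ≤ ∫ y in Iic x, |f y * f' y| :=
        (le_abs_self _).trans abs_integral_le_integral_abs
    _ ≤ ∫ y, |f y * f' y| := setIntegral_le_integral hint.abs (ae_of_all _ fun y => abs_nonneg _)

theorem sq_le_two_mul_sqrt_integral_sq_mul_sqrt_integral_sq_of_tendsto_atBot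
    (hderiv : ∀ y, HasDerivAt f (f' y) y) (hf : MemLp f 2) (hf' : MemLp f' 2)
    (hbot : Tendsto f atBot (𝓝 0)) (x : ℝ) :
    f x ^ 2 ≤ 2 * √(∫ y, f y ^ 2) * √(∫ y, f' y ^ 2) := by
  rw [mul_assoc]
  exact (sq_le_two_mul_integral_abs_mul_of_tendsto_atBot hderiv (hf.integrable_mul hf') hbot x).trans
    (by gcongr; exact integral_abs_mul_le_sqrt_integral_sq_mul_sqrt_integral_sq hf hf')

end VanishingAtBot

theorem Real.sqrt_sqrt_eq_rpow {a : ℝ} (ha : 0 ≤ a) : √(√a) = a ^ ((1 : ℝ) / 4) := by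
  rw [Real.sqrt_eq_rpow, Real.sqrt_eq_rpow, ← Real.rpow_mul ha]
  norm_num

theorem sobolev_inequality_one_dim_general (f : ℝ → ℝ)
    (hf : ContDiff ℝ 1 f)
    (hf2 : Integrable (fun x => (f x) ^ 2))
    (hdf2 : Integrable (fun x => (deriv f x) ^ 2))
    (hbot : Tendsto f atBot (nhds 0)) :
    ∀ x : ℝ, |f x| ≤
      Real.sqrt 2 * (∫ y, (f y) ^ 2) ^ ((1 : ℝ) / 4) * (∫ y, (deriv f y) ^ 2) ^ ((1 : ℝ) / 4) := by
  intro x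
  have hderiv (y : ℝ) : HasDerivAt f (deriv f y) y := (hf.differentiable one_ne_zero y).hasDerivAt
  have hL2 : MemLp f 2 := (memLp_two_iff_integrable_sq hf.continuous.aestronglyMeasurable).2 hf2
  have hL2' : MemLp (deriv f) 2 :=
    (memLp_two_iff_integrable_sq (measurable_deriv f).aestronglyMeasurable).2 hdf2
  calc |f x| = √(f x ^ 2) := (Real.sqrt_sq_eq_abs _).symm
    _ ≤ √(2 * √(∫ y, f y ^ 2) * √(∫ y, deriv f y ^ 2)) := Real.sqrt_le_sqrt
        (sq_le_two_mul_sqrt_integral_sq_mul_sqrt_integral_sq_of_tendsto_atBot hderiv hL2 hL2' hbot x)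
    _ = _ := by
        rw [Real.sqrt_mul (by positivity), Real.sqrt_mul (by positivity),
          Real.sqrt_sqrt_eq_rpow (integral_nonneg fun y => sq_nonneg _),
          Real.sqrt_sqrt_eq_rpow (integral_nonneg fun y => sq_nonneg _)]

/-- **Sobolev inequality on the line**: if `f` is continuously differentiable, `f` and `f'`
are square integrable and `f` vanishes at infinity, then
`sup |f| ≤ √2 ‖f‖_{L²}^{1/2} ‖f'‖_{L²}^{1/2}`. -/
theorem sobolev_inequality_one_dim (f : ℝ → ℝ)
    (hf : ContDiff ℝ 1 f)
    (hf2 : Integrable (fun x => (f x) ^ 2))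
    (hdf2 : Integrable (fun x => (deriv f x) ^ 2))
    (htop : Tendsto f atTop (nhds 0))
    (hbot : Tendsto f atBot (nhds 0)) :
    ∀ x : ℝ, |f x| ≤
      Real.sqrt 2 * (∫ y, (f y) ^ 2) ^ ((1 : ℝ) / 4) * (∫ y, (deriv f y) ^ 2) ^ ((1 : ℝ) / 4) :=
  sobolev_inequality_one_dim_general f hf hf2 hdf2 hbot
end

section
/- Let w : [0,∞)×ℝ → ℝ be a twice continuously differentiable solution of the Burgers equation ∂ₜw + w∂ₓw = 0 with bounded first-order derivatives, and suppose ∂ₓw(0,x) > 0 for all x and M := sup_{x∈ℝ} ∂ₓw(0,x) < ∞. Then for every t > 0 and x ∈ ℝ, 0 < ∂ₓw(t,x) ≤ min{M, 1/t}. -/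
/-- Partial derivative in the time variable. -/
noncomputable def pt (f : ℝ → ℝ → ℝ) (t x : ℝ) : ℝ := deriv (fun s => f s x) t

/-- Partial derivative in the space variable. -/
noncomputable def px (f : ℝ → ℝ → ℝ) (t x : ℝ) : ℝ := deriv (fun y => f t y) x

/-!
Along the line `s ↦ (s, y + s c)` with `c = w(0,y)`, the Burgers equation says that `w - c`
solves a linear equation with bounded coefficient `-∂ₓw`, so by Grönwall `w ≡ c` there: the line
is a characteristic. Differentiating the equation in `x` and using `∂ₜ∂ₓw = ∂ₓ∂ₜw`, the slope
`q(s) = ∂ₓw(s, y + s c)` then satisfies the Riccati equation `q' = -q²`, and a second Grönwall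
argument gives `(1 + a s) q(s) = a` with `a = ∂ₓw(0,y) ∈ (0, M]`. Since `w(0,·)` is increasing,
`y ↦ y + t w(0,y)` is onto, so every `(t,x)` lies on such a characteristic, and
`a / (1 + a t) ∈ (0, min a (1/t)]`. Time derivatives are only used at `t > 0`: `pt` at `t = 0`
is a two-sided derivative of a function given on `t ≥ 0` only.
-/

open Set Filter Topology Function

theorem eqOn_zero_of_norm_deriv_le_mul_norm {E : Type*} [NormedAddCommGroup E] [NormedSpace ℝ E]
    {f f' : ℝ → E} {K a b : ℝ} (hf : ContinuousOn f (Icc a b))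
    (hf' : ∀ x ∈ Ioo a b, HasDerivAt f (f' x) x) (ha : f a = 0)
    (bound : ∀ x ∈ Ioo a b, ‖f' x‖ ≤ K * ‖f x‖) : EqOn f 0 (Icc a b) := by
  intro x hx
  rcases hx.1.eq_or_lt with rfl | hax
  · exact ha
  have hIoo : ∀ {δ}, δ ∈ Ioo a x → ∀ z ∈ Ico δ x, z ∈ Ioo a b := fun hδ z hz =>
    ⟨hδ.1.trans_le hz.1, hz.2.trans_le hx.2⟩
  -- Grönwall on `[δ, x]` for every `δ > a`, then let `δ → a`: no derivative is assumed at `a`.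
  have hgronwall : ∀ δ ∈ Ioo a x, ‖f x‖ ≤ ‖f δ‖ * Real.exp (K * (x - δ)) := by
    intro δ hδ
    have := norm_le_gronwallBound_of_norm_deriv_right_le (hf.mono (Icc_subset_Icc hδ.1.le hx.2))
      (fun z hz => (hf' z (hIoo hδ z hz)).hasDerivWithinAt) le_rfl
      (fun z hz => (bound z (hIoo hδ z hz)).trans_eq (add_zero _).symm) x ⟨hδ.2.le, le_rfl⟩
    rwa [gronwallBound_ε0] at this
  have hcont : ContinuousWithinAt (fun δ => ‖f δ‖ * Real.exp (K * (x - δ))) (Ioo a x) a :=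
    ((hf a ⟨le_rfl, hax.le.trans hx.2⟩).mono
      (Ioo_subset_Icc_self.trans (Icc_subset_Icc_right hx.2))).norm.mul (by fun_prop)
  have : NeBot (𝓝[Ioo a x] a) := left_nhdsWithin_Ioo_neBot hax
  have hlim := hcont.tendsto
  rw [ha, norm_zero, zero_mul] at hlim
  exact norm_le_zero_iff.mp (ge_of_tendsto hlim (eventually_nhdsWithin_of_forall hgronwall))

theorem surjective_add_mul_of_monotone {g : ℝ → ℝ} (hg : Monotone g) (hgc : Continuous g)
    {t : ℝ} (ht : 0 ≤ t) : Surjective fun z => z + t * g z := by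
  refine Continuous.surjective (by fun_prop) ?_ ?_
  · refine tendsto_atTop_add_right_of_le' _ (t * g 0) tendsto_id ?_
    filter_upwards [eventually_ge_atTop 0] with z hz
    exact mul_le_mul_of_nonneg_left (hg hz) ht
  · refine tendsto_atBot_add_right_of_ge' _ (t * g 0) tendsto_id ?_
    filter_upwards [eventually_le_atBot 0] with z hz
    exact mul_le_mul_of_nonneg_left (hg hz) ht

section PartialDerivatives

variable {f : ℝ → ℝ → ℝ}

theorem pt_eq_fderiv {t x : ℝ} (hf : DifferentiableAt ℝ (uncurry f) (t, x)) :
    pt f t x = fderiv ℝ (uncurry f) (t, x) (1, 0) :=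
  (hf.hasFDerivAt.comp_hasDerivAt_of_eq t
    ((hasDerivAt_id t).prodMk (hasDerivAt_const t x)) rfl).deriv

theorem px_eq_fderiv {t x : ℝ} (hf : DifferentiableAt ℝ (uncurry f) (t, x)) :
    px f t x = fderiv ℝ (uncurry f) (t, x) (0, 1) :=
  (hf.hasFDerivAt.comp_hasDerivAt_of_eq x
    ((hasDerivAt_const x t).prodMk (hasDerivAt_id x)) rfl).deriv

theorem DifferentiableAt.hasDerivAt_px {t x : ℝ} (hf : DifferentiableAt ℝ (uncurry f) (t, x)) :
    HasDerivAt (f t) (px f t x) x :=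
  (hf.comp x ((differentiableAt_const t).prodMk differentiableAt_id)).hasDerivAt

theorem DifferentiableAt.hasDerivAt_line {y c s : ℝ}
    (hf : DifferentiableAt ℝ (uncurry f) (s, y + s * c)) :
    HasDerivAt (fun s => f s (y + s * c)) (pt f s (y + s * c) + c * px f s (y + s * c)) s := by
  have hline : HasDerivAt (fun s : ℝ => (s, y + s * c)) ((1 : ℝ), c) s :=
    (hasDerivAt_id s).prodMk (by simpa using ((hasDerivAt_id s).mul_const c).const_add y)
  have hsplit : ((1 : ℝ), c) = ((1 : ℝ), (0 : ℝ)) + c • ((0 : ℝ), (1 : ℝ)) := by simp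
  have h := hf.hasFDerivAt.comp_hasDerivAt s hline
  rwa [hsplit, map_add, map_smul, smul_eq_mul, ← pt_eq_fderiv hf, ← px_eq_fderiv hf] at h

theorem DifferentiableOn.hasDerivAt_fderivWithin_slice {s : Set ℝ}
    (hf : DifferentiableOn ℝ (uncurry f) (s ×ˢ univ)) {t : ℝ} (ht : t ∈ s) (x : ℝ) :
    HasDerivAt (f t) (fderivWithin ℝ (uncurry f) (s ×ˢ univ) (t, x) (0, 1)) x := by
  have hslice : HasDerivWithinAt (fun y => (t, y)) ((0 : ℝ), (1 : ℝ)) univ x :=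
    ((hasDerivAt_const x t).prodMk (hasDerivAt_id x)).hasDerivWithinAt
  have h := (hf (t, x) ⟨ht, trivial⟩).hasFDerivWithinAt.comp_hasDerivWithinAt x hslice
    fun _ _ => ⟨ht, trivial⟩
  exact hasDerivWithinAt_univ.mp h

theorem DifferentiableOn.hasDerivAt_px {s : Set ℝ}
    (hf : DifferentiableOn ℝ (uncurry f) (s ×ˢ univ)) {t : ℝ} (ht : t ∈ s) (x : ℝ) :
    HasDerivAt (f t) (px f t x) x := by
  have h := hf.hasDerivAt_fderivWithin_slice ht x
  rwa [← h.deriv] at h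

theorem ContDiffOn.continuousOn_px {s : Set ℝ} (hs : UniqueDiffOn ℝ s)
    (hf : ContDiffOn ℝ 1 (uncurry f) (s ×ˢ univ)) : ContinuousOn (uncurry (px f)) (s ×ˢ univ) :=
  ((hf.continuousOn_fderivWithin (hs.prod uniqueDiffOn_univ) le_rfl).clm_apply
    continuousOn_const).congr fun p hp =>
      ((hf.differentiableOn one_ne_zero).hasDerivAt_fderivWithin_slice hp.1 p.2).deriv

theorem uncurry_px_eventuallyEq {p : ℝ × ℝ} (hf : ∀ᶠ q in 𝓝 p, DifferentiableAt ℝ (uncurry f) q) :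
    uncurry (px f) =ᶠ[𝓝 p] fun q => fderiv ℝ (uncurry f) q (0, 1) :=
  hf.mono fun q hq => px_eq_fderiv (t := q.1) (x := q.2) hq

theorem uncurry_pt_eventuallyEq {p : ℝ × ℝ} (hf : ∀ᶠ q in 𝓝 p, DifferentiableAt ℝ (uncurry f) q) :
    uncurry (pt f) =ᶠ[𝓝 p] fun q => fderiv ℝ (uncurry f) q (1, 0) :=
  hf.mono fun q hq => pt_eq_fderiv (t := q.1) (x := q.2) hq

theorem ContDiffAt.eventually_differentiableAt {E F : Type*} [NormedAddCommGroup E]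
    [NormedSpace ℝ E] [NormedAddCommGroup F] [NormedSpace ℝ F] {g : E → F} {n : WithTop ℕ∞}
    {p : E} (hg : ContDiffAt ℝ n g p) (hn : 1 ≤ n) : ∀ᶠ q in 𝓝 p, DifferentiableAt ℝ g q :=
  ((hg.of_le hn).eventually (by simp)).mono fun _ hq => hq.differentiableAt one_ne_zero

theorem ContDiffAt.uncurry_px {m n : WithTop ℕ∞} {p : ℝ × ℝ}
    (hf : ContDiffAt ℝ n (uncurry f) p) (hmn : m + 1 ≤ n) : ContDiffAt ℝ m (uncurry (px f)) p :=
  ((hf.fderiv_right hmn).clm_apply contDiffAt_const).congr_of_eventuallyEq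
    (uncurry_px_eventuallyEq (hf.eventually_differentiableAt (le_add_self.trans hmn)))

theorem ContDiffAt.uncurry_pt {m n : WithTop ℕ∞} {p : ℝ × ℝ}
    (hf : ContDiffAt ℝ n (uncurry f) p) (hmn : m + 1 ≤ n) : ContDiffAt ℝ m (uncurry (pt f)) p :=
  ((hf.fderiv_right hmn).clm_apply contDiffAt_const).congr_of_eventuallyEq
    (uncurry_pt_eventuallyEq (hf.eventually_differentiableAt (le_add_self.trans hmn)))

theorem fderiv_uncurry_px {p : ℝ × ℝ} (hf : ContDiffAt ℝ 2 (uncurry f) p) :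
    fderiv ℝ (uncurry (px f)) p = (fderiv ℝ (fderiv ℝ (uncurry f)) p).flip (0, 1) := by
  rw [(uncurry_px_eventuallyEq (hf.eventually_differentiableAt one_le_two)).fderiv_eq,
    fderiv_clm_apply ((hf.fderiv_right le_rfl).differentiableAt one_ne_zero)
      (differentiableAt_const _)]
  simp

theorem fderiv_uncurry_pt {p : ℝ × ℝ} (hf : ContDiffAt ℝ 2 (uncurry f) p) :
    fderiv ℝ (uncurry (pt f)) p = (fderiv ℝ (fderiv ℝ (uncurry f)) p).flip (1, 0) := by
  rw [(uncurry_pt_eventuallyEq (hf.eventually_differentiableAt one_le_two)).fderiv_eq,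
    fderiv_clm_apply ((hf.fderiv_right le_rfl).differentiableAt one_ne_zero)
      (differentiableAt_const _)]
  simp

theorem pt_px_comm {t x : ℝ} (hf : ContDiffAt ℝ 2 (uncurry f) (t, x)) :
    pt (px f) t x = px (pt f) t x := by
  rw [pt_eq_fderiv ((hf.uncurry_px (m := 1) le_rfl).differentiableAt one_ne_zero),
    px_eq_fderiv ((hf.uncurry_pt (m := 1) le_rfl).differentiableAt one_ne_zero),
    fderiv_uncurry_px hf, fderiv_uncurry_pt hf]
  exact hf.isSymmSndFDerivAt (by simp) _ _

end PartialDerivatives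

theorem Ici_prod_univ_mem_nhds {a t : ℝ} (ht : a < t) (x : ℝ) : Ici a ×ˢ univ ∈ 𝓝 (t, x) :=
  prod_mem_nhds (Ici_mem_nhds ht) univ_mem

theorem ContinuousOn.comp_line {g : ℝ → ℝ → ℝ} {a : ℝ}
    (hg : ContinuousOn (uncurry g) (Ici a ×ˢ univ)) (y c : ℝ) :
    ContinuousOn (fun s => g s (y + s * c)) (Ici a) :=
  hg.comp (continuous_id.prodMk (by fun_prop)).continuousOn fun _ hs => ⟨hs, trivial⟩

section Burgers

variable {w : ℝ → ℝ → ℝ}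

theorem hasDerivAt_along_line_of_burgers {y c s : ℝ}
    (hw : DifferentiableAt ℝ (uncurry w) (s, y + s * c))
    (hb : pt w s (y + s * c) + w s (y + s * c) * px w s (y + s * c) = 0) :
    HasDerivAt (fun s => w s (y + s * c)) ((c - w s (y + s * c)) * px w s (y + s * c)) s := by
  convert hw.hasDerivAt_line using 1
  linear_combination -hb

theorem hasDerivAt_px_along_characteristic {y c s : ℝ}
    (hw : ContDiffAt ℝ 2 (uncurry w) (s, y + s * c))
    (hb : ∀ x, pt w s x + w s x * px w s x = 0) (hc : w s (y + s * c) = c) :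
    HasDerivAt (fun s => px w s (y + s * c)) (-px w s (y + s * c) ^ 2) s := by
  have hpx := (hw.uncurry_px (m := 1) le_rfl).differentiableAt one_ne_zero
  have hpt := (hw.uncurry_pt (m := 1) le_rfl).differentiableAt one_ne_zero
  -- Differentiate the equation in `x`; `pt (px w) = px (pt w)` turns it into the derivative along
  -- the characteristic.
  have hdx := hpt.hasDerivAt_px.add
    ((hw.differentiableAt two_ne_zero).hasDerivAt_px.mul hpx.hasDerivAt_px)
  rw [show pt w s + w s * px w s = 0 from funext hb] at hdx
  have hx := (hasDerivAt_const _ (0 : ℝ)).unique hdx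
  convert hpx.hasDerivAt_line using 1
  rw [hc] at hx
  rw [pt_px_comm hw]
  linear_combination hx

theorem eq_along_characteristic (hw : ContDiffOn ℝ 1 (uncurry w) (Ici 0 ×ˢ univ))
    (hb : ∀ t x, 0 ≤ t → pt w t x + w t x * px w t x = 0) {K : ℝ}
    (hK : ∀ t x, 0 ≤ t → |px w t x| ≤ K) (y T : ℝ) :
    ∀ s ∈ Icc 0 T, w s (y + s * w 0 y) = w 0 y := by
  intro s hs
  refine sub_eq_zero.mp (eqOn_zero_of_norm_deriv_le_mul_norm (K := K)
    (f := fun s => w s (y + s * w 0 y) - w 0 y)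
    (f' := fun s => (w 0 y - w s (y + s * w 0 y)) * px w s (y + s * w 0 y))
    ((hw.continuousOn.comp_line y (w 0 y)).mono Icc_subset_Ici_self |>.sub continuousOn_const)
    (fun s hs => ?_) (by simp) (fun s hs => ?_) hs)
  · exact (hasDerivAt_along_line_of_burgers
      ((hw.contDiffAt (Ici_prod_univ_mem_nhds hs.1 _)).differentiableAt one_ne_zero)
      (hb _ _ hs.1.le)).sub_const _
  · rw [Real.norm_eq_abs, Real.norm_eq_abs, abs_mul, abs_sub_comm, mul_comm]
    exact mul_le_mul_of_nonneg_right (hK _ _ hs.1.le) (abs_nonneg _)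

theorem px_along_characteristic (hw : ContDiffOn ℝ 2 (uncurry w) (Ici 0 ×ˢ univ))
    (hb : ∀ t x, 0 ≤ t → pt w t x + w t x * px w t x = 0) {K : ℝ}
    (hK : ∀ t x, 0 ≤ t → |px w t x| ≤ K) (y T : ℝ) :
    ∀ s ∈ Icc 0 T, (1 + px w 0 y * s) * px w s (y + s * w 0 y) = px w 0 y := by
  have hq : ContinuousOn (fun s => px w s (y + s * w 0 y)) (Icc 0 T) :=
    (((hw.of_le one_le_two).continuousOn_px (uniqueDiffOn_Ici 0)).comp_line _ _).mono
      Icc_subset_Ici_self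
  have hconst := eq_along_characteristic (hw.of_le one_le_two) hb hK y T
  -- With `a = px w 0 y` and `q s = px w s (y + s * w 0 y)`, `(1 + a s) q s - a` solves `f' = -q f`.
  intro s hs
  refine sub_eq_zero.mp (eqOn_zero_of_norm_deriv_le_mul_norm (K := K)
    (f := fun s => (1 + px w 0 y * s) * px w s (y + s * w 0 y) - px w 0 y)
    (f' := fun s => -px w s (y + s * w 0 y) *
      ((1 + px w 0 y * s) * px w s (y + s * w 0 y) - px w 0 y))
    (((continuous_const.add (continuous_const.mul continuous_id)).continuousOn.mul hq).sub
      continuousOn_const) (fun s hs => ?_) (by simp) (fun s hs => ?_) hs)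
  · have hriccati := hasDerivAt_px_along_characteristic
      (hw.contDiffAt (Ici_prod_univ_mem_nhds hs.1 _)) (hb s · hs.1.le)
      (hconst s (Ioo_subset_Icc_self hs))
    have hlin := ((hasDerivAt_id' s).const_mul (px w 0 y)).const_add 1
    refine ((hlin.mul hriccati).sub_const _).congr_deriv ?_
    ring
  · rw [Real.norm_eq_abs, Real.norm_eq_abs, abs_mul, abs_neg]
    exact mul_le_mul_of_nonneg_right (hK _ _ hs.1.le) (abs_nonneg _)

end Burgers

/-- For a C² solution `w` of the Burgers equation on `[0,∞)×ℝ` with bounded first-order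
derivatives, if `∂ₓw(0,·) > 0` with upper bound `M`, then `0 < ∂ₓw(t,x) ≤ min{M, 1/t}`
for all `t > 0`. -/
theorem burgers_gradient_decay (w : ℝ → ℝ → ℝ)
    (hsmooth : ContDiffOn ℝ 2 (fun p : ℝ × ℝ => w p.1 p.2) (Set.Ici 0 ×ˢ Set.univ))
    (hbdd : ∃ K : ℝ, ∀ t x : ℝ, 0 ≤ t → |pt w t x| ≤ K ∧ |px w t x| ≤ K)
    (hburgers : ∀ t x : ℝ, 0 ≤ t → pt w t x + w t x * px w t x = 0)
    (M : ℝ)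
    (hpos : ∀ x : ℝ, 0 < px w 0 x)
    (hM : ∀ x : ℝ, px w 0 x ≤ M) :
    ∀ t x : ℝ, 0 < t → 0 < px w t x ∧ px w t x ≤ min M (1 / t) := by
  intro t x ht
  obtain ⟨K, hK⟩ := hbdd
  have hw₀ : ∀ z, HasDerivAt (w 0) (px w 0 z) z :=
    (hsmooth.differentiableOn two_ne_zero).hasDerivAt_px self_mem_Ici
  obtain ⟨y, rfl⟩ := surjective_add_mul_of_monotone
    (monotone_of_hasDerivAt_nonneg hw₀ fun z => (hpos z).le)
    (continuous_iff_continuousAt.2 fun z => (hw₀ z).continuousAt) ht.le x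
  have ha := hpos y
  have hq := px_along_characteristic hsmooth hburgers (fun t x ht => (hK t x ht).2) y t t
    ⟨ht.le, le_rfl⟩
  have hdenom : 0 < 1 + px w 0 y * t := by positivity
  rw [mul_comm, ← eq_div_iff hdenom.ne'] at hq
  dsimp only
  rw [hq]
  refine ⟨by positivity, le_min ((div_le_self ha.le ?_).trans (hM y)) ?_⟩
  · linarith [mul_pos ha ht]
  · rw [div_le_div_iff₀ hdenom ht]
    linarith
end

section
/- Fix A > 0, ε > 0 and ξ ∈ ℝ, and set a(ξ) = εξ² + 1. Suppose n̂, û : [0,∞) → ℂ are differentiable and satisfy n̂′(t) = −iξ û(t) and û′(t) = −A iξ n̂(t) + iξ φ̂(t) − ξ² û(t), where φ̂(t) = −n̂(t)/a(ξ). Then for all t ≥ 0, d/dt [ (A + 1/a(ξ)) |n̂(t)|² + |û(t)|² ] = −2ξ² |û(t)|². -/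
open Complex

open scoped InnerProductSpace

theorem Complex.hasDerivAt_normSq {f : ℝ → ℂ} {f' : ℂ} {t : ℝ} (hf : HasDerivAt f f' t) :
    HasDerivAt (fun s => normSq (f s)) (2 * ⟪f t, f'⟫_ℝ) t := by
  simpa only [normSq_eq_norm_sq] using hf.norm_sq

/-- The two coupling terms cancel because `c` and `ξ` are real. -/
theorem hasDerivAt_energy_of_skew_damped {n u : ℝ → ℂ} {c ξ ν t : ℝ}
    (hn : HasDerivAt n (-(I * ξ) * u t) t) (hu : HasDerivAt u (-(c * I * ξ) * n t - ν * u t) t) :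
    HasDerivAt (fun s => c * normSq (n s) + normSq (u s)) (-2 * ν * normSq (u t)) t := by
  refine ((hasDerivAt_normSq hn).const_mul c).add (hasDerivAt_normSq hu) |>.congr_deriv ?_
  simp only [Complex.inner, normSq_apply, mul_re, mul_im, sub_re, sub_im, neg_re, neg_im,
    conj_re, conj_im, I_re, I_im, ofReal_re, ofReal_im]
  ring

theorem linearized_nsp_energy_identity_general (A ξ : ℝ)
    (a : ℝ)
    (nh uh : ℝ → ℂ)
    (hn : ∀ t : ℝ, 0 ≤ t → HasDerivAt nh (-(Complex.I * (ξ : ℂ)) * uh t) t)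
    (hu : ∀ t : ℝ, 0 ≤ t → HasDerivAt uh
      (-((A : ℂ) * Complex.I * (ξ : ℂ)) * nh t + Complex.I * (ξ : ℂ) * (-(nh t) / (a : ℂ))
        - (ξ : ℂ) ^ 2 * uh t) t) :
    ∀ t : ℝ, 0 ≤ t →
      HasDerivAt (fun s => (A + 1 / a) * Complex.normSq (nh s) + Complex.normSq (uh s))
        (-2 * ξ ^ 2 * Complex.normSq (uh t)) t := by
  intro t ht
  -- The Poisson term `iξ (-n̂ / a)` only shifts the coupling constant from `A` to `A + 1 / a`.
  have hu' : HasDerivAt uh (-(((A + 1 / a : ℝ) : ℂ) * I * ξ) * nh t - ((ξ ^ 2 : ℝ) : ℂ) * uh t) t := by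
    convert hu t ht using 1
    push_cast
    ring
  exact hasDerivAt_energy_of_skew_damped (hn t ht) hu'

/-- Energy identity for the Fourier-transformed linearized one-fluid
Navier–Stokes–Poisson system: `d/dt [(A + 1/a(ξ))|n̂|² + |û|²] = −2ξ²|û|²`. -/
theorem linearized_nsp_energy_identity (A ε ξ : ℝ) (hA : 0 < A) (hε : 0 < ε)
    (a : ℝ) (ha : a = ε * ξ ^ 2 + 1)
    (nh uh : ℝ → ℂ)
    (hn : ∀ t : ℝ, 0 ≤ t → HasDerivAt nh (-(Complex.I * (ξ : ℂ)) * uh t) t)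
    (hu : ∀ t : ℝ, 0 ≤ t → HasDerivAt uh
      (-((A : ℂ) * Complex.I * (ξ : ℂ)) * nh t + Complex.I * (ξ : ℂ) * (-(nh t) / (a : ℂ))
        - (ξ : ℂ) ^ 2 * uh t) t) :
    ∀ t : ℝ, 0 ≤ t →
      HasDerivAt (fun s => (A + 1 / a) * Complex.normSq (nh s) + Complex.normSq (uh s))
        (-2 * ξ ^ 2 * Complex.normSq (uh t)) t :=
  linearized_nsp_energy_identity_general A ξ a nh uh hn hu
end

section
/- Fix A > 0. There exists a constant C > 0 depending only on A such that for every ε > 0, every ξ ∈ ℝ and every differentiable pair n̂, û : [0,∞) → ℂ satisfying n̂′ = −iξû, û′ = −Aiξn̂ + iξφ̂ − ξ²û with φ̂ = −n̂/a(ξ) and a(ξ) = εξ² + 1, one has for all t ≥ 0: d/dt [ Re( iξ n̂(t) · conj(û(t)) ) / (1+ξ²) ] + (ξ²/(2(1+ξ²))) (A + 1/a(ξ)) |n̂(t)|² ≤ C ξ² |û(t)|². -/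
/-!
With `b = 1/a ∈ (0, 1]` the system gives
`d/dt Re(iξ n̂ conj û) = ξ²|û|² - (A + b)ξ²|n̂|² - ξ³ Re(i n̂ conj û)`,
and Young's inequality `|ξ|³|n̂||û| ≤ Aξ²|n̂|²/2 + ξ⁴|û|²/(2A)` absorbs the cross term into half of
the dissipative `|n̂|²` term, leaving `C = 1 + 1/(2A)`.
-/

open Complex ComplexConjugate

theorem HasDerivAt.re_mul_mul_conj {f g : ℝ → ℂ} {f' g' : ℂ} {t : ℝ} (c : ℂ)
    (hf : HasDerivAt f f' t) (hg : HasDerivAt g g' t) :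
    HasDerivAt (fun s => (c * f s * conj (g s)).re) (c * (f' * conj (g t) + f t * conj g')).re t := by
  have h := reCLM.hasFDerivAt.comp_hasDerivAt t ((hf.const_mul c).mul hg.star)
  simp only [Function.comp_def, reCLM_apply, Pi.mul_apply] at h
  simpa only [← starRingEnd_apply, mul_add, mul_assoc] using h

theorem young_abs_pow_three_mul_le {A : ℝ} (hA : 0 < A) (ξ x y : ℝ) :
    |ξ| ^ 3 * x * y ≤ A * ξ ^ 2 * x ^ 2 / 2 + ξ ^ 4 * y ^ 2 / (2 * A) := by
  have hsq : 0 ≤ (A * |ξ| * x - |ξ| ^ 2 * y) ^ 2 := sq_nonneg _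
  rw [show ξ ^ 4 = (ξ ^ 2) ^ 2 by ring, ← sq_abs ξ]
  field_simp
  nlinarith

theorem neg_pow_three_mul_re_le (ξ : ℝ) (N U : ℂ) :
    -(ξ ^ 3 * (I * N * conj U).re) ≤ |ξ| ^ 3 * ‖N‖ * ‖U‖ :=
  calc -(ξ ^ 3 * (I * N * conj U).re) ≤ |ξ ^ 3| * |(I * N * conj U).re| := by
        rw [← abs_mul]; exact neg_le_abs _
    _ ≤ |ξ| ^ 3 * (‖N‖ * ‖U‖) := by
        rw [abs_pow]
        gcongr
        simpa using abs_re_le_norm (I * N * conj U)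
    _ = |ξ| ^ 3 * ‖N‖ * ‖U‖ := by ring

theorem re_I_mul_nsp_cross_deriv (A b ξ : ℝ) (N U : ℂ) :
    (I * ξ * (-(I * ξ) * U * conj U + N * conj (-((A + b : ℝ) * I * ξ) * N - ξ ^ 2 * U))).re
      = ξ ^ 2 * ‖U‖ ^ 2 - (A + b) * ξ ^ 2 * ‖N‖ ^ 2 - ξ ^ 3 * (I * N * conj U).re := by
  simp only [← normSq_eq_norm_sq, normSq_apply]
  simp only [pow_succ, pow_zero, map_sub, map_mul, map_neg,
    conj_ofReal, conj_I, mul_re, mul_im, add_re, add_im, sub_re, sub_im, neg_re, neg_im, I_re, I_im,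
    ofReal_re, ofReal_im, conj_re, conj_im, one_re, one_im]
  ring

theorem nsp_cross_deriv_add_le {A b : ℝ} (hA : 0 < A) (hb : 0 ≤ b) (ξ : ℝ) (N U : ℂ) :
    (I * ξ * (-(I * ξ) * U * conj U + N * conj (-((A + b : ℝ) * I * ξ) * N - ξ ^ 2 * U))).re
        + ξ ^ 2 * (A + b) / 2 * ‖N‖ ^ 2
      ≤ (1 + 1 / (2 * A)) * ξ ^ 2 * (1 + ξ ^ 2) * ‖U‖ ^ 2 := by
  rw [re_I_mul_nsp_cross_deriv]
  have hcross := (neg_pow_three_mul_re_le ξ N U).trans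
    (young_abs_pow_three_mul_le hA ξ ‖N‖ ‖U‖)
  have hbN : 0 ≤ b * ξ ^ 2 * ‖N‖ ^ 2 := by positivity
  have hU2 : 0 ≤ ξ ^ 2 * ‖U‖ ^ 2 / (2 * A) := by positivity
  have hU4 : 0 ≤ ξ ^ 4 * ‖U‖ ^ 2 := by positivity
  have hC : (1 + 1 / (2 * A)) * ξ ^ 2 * (1 + ξ ^ 2) * ‖U‖ ^ 2
      = ξ ^ 2 * ‖U‖ ^ 2 + ξ ^ 4 * ‖U‖ ^ 2 + ξ ^ 4 * ‖U‖ ^ 2 / (2 * A)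
        + ξ ^ 2 * ‖U‖ ^ 2 / (2 * A) := by ring
  linarith

/-- Cross-term estimate for the Fourier-transformed linearized one-fluid
Navier–Stokes–Poisson system: there is `C = C(A) > 0` such that
`d/dt [Re(iξ n̂ conj(û))/(1+ξ²)] + (ξ²/(2(1+ξ²)))(A + 1/a(ξ))|n̂|² ≤ C ξ² |û|²`. -/
theorem linearized_nsp_cross_term_estimate (A : ℝ) (hA : 0 < A) :
    ∃ C : ℝ, 0 < C ∧
      ∀ ε ξ : ℝ, 0 < ε → ∀ a : ℝ, a = ε * ξ ^ 2 + 1 →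
        ∀ nh uh : ℝ → ℂ,
          (∀ t : ℝ, 0 ≤ t → HasDerivAt nh (-(Complex.I * (ξ : ℂ)) * uh t) t) →
          (∀ t : ℝ, 0 ≤ t → HasDerivAt uh
            (-((A : ℂ) * Complex.I * (ξ : ℂ)) * nh t
              + Complex.I * (ξ : ℂ) * (-(nh t) / (a : ℂ)) - (ξ : ℂ) ^ 2 * uh t) t) →
          ∀ t : ℝ, 0 ≤ t →
            ∃ d : ℝ,
              HasDerivAt
                (fun s => (Complex.I * (ξ : ℂ) * nh s * (starRingEnd ℂ) (uh s)).re / (1 + ξ ^ 2))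
                d t ∧
              d + ξ ^ 2 / (2 * (1 + ξ ^ 2)) * (A + 1 / a) * Complex.normSq (nh t)
                ≤ C * ξ ^ 2 * Complex.normSq (uh t) := by
  refine ⟨1 + 1 / (2 * A), by positivity, ?_⟩
  intro ε ξ hε a ha nh uh hn hu t ht
  have ha0 : 0 < a := by rw [ha]; positivity
  have hu' : -((A : ℂ) * I * ξ) * nh t + I * ξ * (-(nh t) / a) - ξ ^ 2 * uh t
      = -((A + 1 / a : ℝ) * I * ξ) * nh t - ξ ^ 2 * uh t := by
    push_cast
    ring
  have hut := hu t ht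
  rw [hu'] at hut
  refine ⟨_, ((hn t ht).re_mul_mul_conj (I * ξ) hut).div_const (1 + ξ ^ 2), ?_⟩
  have key := nsp_cross_deriv_add_le hA (b := 1 / a) (by positivity) ξ (nh t) (uh t)
  rw [normSq_eq_norm_sq, normSq_eq_norm_sq, div_add' _ _ _ (by positivity),
    div_le_iff₀ (by positivity)]
  calc _ = _ := by field_simp
    _ ≤ _ := key
    _ = _ := by ring
end

section
/- Fix A > 0. There exist constants κ > 0 and λ > 0 depending only on A such that for every ε > 0, every ξ ∈ ℝ and every differentiable pair n̂, û : [0,∞) → ℂ satisfying n̂′ = −iξû, û′ = −Aiξn̂ + iξφ̂ − ξ²û with φ̂ = −n̂/a(ξ) and a(ξ) = εξ² + 1, the energy E(t) := (A + 1/a(ξ)) |n̂(t)|² + |û(t)|² + κ · Re( iξ n̂(t) · conj(û(t)) ) / (1+ξ²) satisfies E(t) ≤ exp( −λ ξ² t / (1+ξ²) ) · E(0) for all t ≥ 0; moreover E(t) is comparable to (A + 1/a(ξ))|n̂(t)|² + |û(t)|² uniformly in ξ and ε. -/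
/-!
The cross term `κ Re(iξ n̂ conj û)/(1+ξ²)` of the modified energy supplies the dissipation of `n̂`
that the natural energy `G` lacks: along the flow its derivative contains
`-κξ²(A+1/a)|n̂|²/(1+ξ²)`. Bounding the remaining cross term by `|ξ| |n̂| |û|` and AM–GM gives
`E' ≤ -(κ/2) ξ²/(1+ξ²) E` for `κ = min A 1`, and Grönwall's inequality yields the decay.
The same bound on the cross term shows `|E - G| ≤ G/2`.
-/

open Complex

/-- The modified energy for the Fourier-transformed linearized system at frequency `ξ`. -/
noncomputable def linE (A a κ ξ : ℝ) (z w : ℂ) : ℝ :=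
  (A + 1 / a) * Complex.normSq z + Complex.normSq w
    + κ * (Complex.I * (ξ : ℂ) * z * (starRingEnd ℂ) w).re / (1 + ξ ^ 2)

/-- The natural energy for the Fourier-transformed linearized system. -/
noncomputable def linG (A a : ℝ) (z w : ℂ) : ℝ :=
  (A + 1 / a) * Complex.normSq z + Complex.normSq w

open ComplexConjugate

theorem le_exp_neg_mul_of_hasDerivAt {f f' : ℝ → ℝ} {r : ℝ}
    (hf : ∀ t, 0 ≤ t → HasDerivAt f (f' t) t) (bound : ∀ t, 0 ≤ t → f' t ≤ -r * f t)
    {t : ℝ} (ht : 0 ≤ t) : f t ≤ Real.exp (-r * t) * f 0 := by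
  have := le_gronwallBound_of_liminf_deriv_right_le (K := -r) (ε := 0) (a := 0) (b := t)
    (fun s hs => (hf s hs.1).continuousAt.continuousWithinAt)
    (fun s hs _ hr => (hf s hs.1).hasDerivWithinAt.liminf_right_slope_le hr) le_rfl
    (fun s hs => by simpa using bound s hs.1) t ⟨ht, le_rfl⟩
  rwa [gronwallBound_ε0, sub_zero, mul_comm] at this

theorem HasDerivAt.re_mul_conj {f g : ℝ → ℂ} {f' g' : ℂ} {t : ℝ} (hf : HasDerivAt f f' t)
    (hg : HasDerivAt g g' t) :
    HasDerivAt (fun s => (f s * conj (g s)).re) (f' * conj (g t) + f t * conj g').re t :=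
  reCLM.hasFDerivAt.comp_hasDerivAt t (hf.mul hg.star)

theorem abs_re_I_mul_mul_conj_le (ξ : ℝ) (z w : ℂ) :
    |(I * ξ * z * conj w).re| ≤ |ξ| * ‖z‖ * ‖w‖ :=
  (abs_re_le_norm _).trans (by simp)

noncomputable def linEDeriv (A a κ ξ : ℝ) (z w : ℂ) : ℝ :=
  -(2 * ξ ^ 2 * normSq w)
    + κ * ξ ^ 2 * (normSq w - (A + 1 / a) * normSq z - (I * ξ * z * conj w).re) / (1 + ξ ^ 2)

theorem linE_eq_re (A a κ ξ : ℝ) (z w : ℂ) :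
    linE A a κ ξ z w = (A + 1 / a) * (z * conj z).re + (w * conj w).re
      + κ / (1 + ξ ^ 2) * (I * ξ * z * conj w).re := by
  simp only [linE, mul_conj, ofReal_re]
  ring

theorem hasDerivAt_linE {A a κ ξ t : ℝ} {nh uh : ℝ → ℂ}
    (hn : HasDerivAt nh (-(I * ξ) * uh t) t)
    (hu : HasDerivAt uh (-(A * I * ξ) * nh t + I * ξ * (-(nh t) / a) - ξ ^ 2 * uh t) t) :
    HasDerivAt (fun s => linE A a κ ξ (nh s) (uh s)) (linEDeriv A a κ ξ (nh t) (uh t)) t := by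
  have hu' : HasDerivAt uh (-(((A + 1 / a : ℝ) : ℂ) * I * ξ) * nh t - ξ ^ 2 * uh t) t := by
    convert hu using 1
    push_cast
    ring
  have h := (((hn.re_mul_conj hn).const_mul (A + 1 / a)).add (hu'.re_mul_conj hu')).add
    (((hn.const_mul (I * ξ)).re_mul_conj hu').const_mul (κ / (1 + ξ ^ 2)))
  simp only [linE_eq_re]
  refine h.congr_deriv ?_
  simp only [linEDeriv, normSq_apply, mul_re, mul_im, add_re, sub_re, sub_im, neg_re, neg_im,
    I_re, I_im, ofReal_re, ofReal_im, conj_re, conj_im, map_sub, map_neg, map_mul, conj_I,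
    conj_ofReal, pow_two]
  ring

theorem abs_linE_sub_linG_le {A a κ ξ : ℝ} (hκ : 0 ≤ κ) (hκ1 : κ ≤ 1) (hκB : κ ≤ A + 1 / a)
    (z w : ℂ) : |linE A a κ ξ z w - linG A a z w| ≤ linG A a z w / 2 := by
  have hM := abs_re_I_mul_mul_conj_le ξ z w
  set M := (I * ξ * z * conj w).re
  have hq : 0 < 1 + ξ ^ 2 := by positivity
  have hdiff : linE A a κ ξ z w - linG A a z w = κ * M / (1 + ξ ^ 2) := by
    simp only [linE, linG]; ring
  have hamgm : 2 * (|ξ| * ‖z‖ * ‖w‖) ≤ ξ ^ 2 * ‖z‖ ^ 2 + ‖w‖ ^ 2 := by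
    nlinarith [two_mul_le_add_sq (|ξ| * ‖z‖) ‖w‖, sq_abs ξ]
  rw [hdiff, abs_div, abs_mul, abs_of_nonneg hκ, abs_of_pos hq, div_le_iff₀ hq]
  simp only [linG, normSq_eq_norm_sq]
  nlinarith [mul_le_mul_of_nonneg_left hM hκ, sq_nonneg ξ, sq_nonneg ‖z‖, sq_nonneg ‖w‖,
    mul_nonneg (sub_nonneg.2 hκB) (mul_nonneg (sq_nonneg ξ) (sq_nonneg ‖z‖))]

theorem linEDeriv_le {A a κ ξ : ℝ} (hκ : 0 < κ) (hκ1 : κ ≤ 1) (hκB : κ ≤ A + 1 / a)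
    (z w : ℂ) :
    linEDeriv A a κ ξ z w ≤ -(κ / 2 * ξ ^ 2 / (1 + ξ ^ 2)) * linE A a κ ξ z w := by
  have hM := abs_re_I_mul_mul_conj_le ξ z w
  set M := (I * ξ * z * conj w).re
  set B := A + 1 / a
  set q := 1 + ξ ^ 2 with hq_def
  have hq : 1 ≤ q := by simp only [hq_def]; nlinarith [sq_nonneg ξ]
  have hB : 0 < B := hκ.trans_le hκB
  have hamgm : 2 * B * (|ξ| * ‖z‖ * ‖w‖) ≤ B ^ 2 * ‖z‖ ^ 2 + ξ ^ 2 * ‖w‖ ^ 2 := by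
    nlinarith [two_mul_le_add_sq (B * ‖z‖) (|ξ| * ‖w‖), sq_abs ξ]
  have hcross : κ * |M| ≤ κ * B * ‖z‖ ^ 2 / 2 + ξ ^ 2 * ‖w‖ ^ 2 / 2 := by
    rw [← mul_le_mul_iff_of_pos_left (by positivity : 0 < 2 * B)]
    nlinarith [mul_le_mul_of_nonneg_left hM hκ.le,
      mul_nonneg (sub_nonneg.2 hκB) (mul_nonneg (sq_nonneg ξ) (sq_nonneg ‖w‖))]
  have hbracket : -(κ * B * ‖z‖ ^ 2 / 2) + (3 * κ / 2 - 2 * q) * ‖w‖ ^ 2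
      - κ * M * (1 - κ / (2 * q)) ≤ 0 := by
    have hc0 : 0 ≤ κ / (2 * q) := by positivity
    have hc1 : 0 ≤ 1 - κ / (2 * q) := by
      rw [sub_nonneg, div_le_one (by positivity)]; linarith
    have hκM : -(κ * M * (1 - κ / (2 * q))) ≤ κ * |M| := by
      calc -(κ * M * (1 - κ / (2 * q))) ≤ κ * |M| * (1 - κ / (2 * q)) := by
            rw [← neg_mul]
            gcongr
            rw [← mul_neg]
            gcongr
            exact neg_le_abs M
        _ ≤ κ * |M| := mul_le_of_le_one_right (by positivity) (by linarith)
    nlinarith [sq_nonneg ‖w‖]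
  have hsplit : linEDeriv A a κ ξ z w + κ / 2 * ξ ^ 2 / q * linE A a κ ξ z w
      = ξ ^ 2 / q * (-(κ * B * ‖z‖ ^ 2 / 2) + (3 * κ / 2 - 2 * q) * ‖w‖ ^ 2
      - κ * M * (1 - κ / (2 * q))) := by
    simp only [linEDeriv, linE, normSq_eq_norm_sq, hq_def]
    field_simp
    ring
  nlinarith [mul_nonpos_of_nonneg_of_nonpos (by positivity : 0 ≤ ξ ^ 2 / q) hbracket]

/-- Dissipative decay of the linearized one-fluid Navier–Stokes–Poisson system in Fourier
variables: there exist `κ, λ > 0` (depending only on `A`) such that the modified energy `E`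
satisfies `E(t) ≤ e^{−λξ²t/(1+ξ²)} E(0)` and `E` is comparable with
`(A + 1/a(ξ))|n̂|² + |û|²` uniformly in `ξ` and `ε`. -/
theorem linearized_nsp_decay (A : ℝ) (hA : 0 < A) :
    ∃ κ lam c₁ c₂ : ℝ, 0 < κ ∧ 0 < lam ∧ 0 < c₁ ∧ 0 < c₂ ∧
      ∀ ε ξ : ℝ, 0 < ε → ∀ a : ℝ, a = ε * ξ ^ 2 + 1 →
        ∀ nh uh : ℝ → ℂ,
          (∀ t : ℝ, 0 ≤ t → HasDerivAt nh (-(Complex.I * (ξ : ℂ)) * uh t) t) →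
          (∀ t : ℝ, 0 ≤ t → HasDerivAt uh
            (-((A : ℂ) * Complex.I * (ξ : ℂ)) * nh t
              + Complex.I * (ξ : ℂ) * (-(nh t) / (a : ℂ)) - (ξ : ℂ) ^ 2 * uh t) t) →
          (∀ t : ℝ, 0 ≤ t →
            linE A a κ ξ (nh t) (uh t)
              ≤ Real.exp (-lam * ξ ^ 2 * t / (1 + ξ ^ 2)) * linE A a κ ξ (nh 0) (uh 0)) ∧
          (∀ t : ℝ, 0 ≤ t →
            c₁ * linG A a (nh t) (uh t) ≤ linE A a κ ξ (nh t) (uh t) ∧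
            linE A a κ ξ (nh t) (uh t) ≤ c₂ * linG A a (nh t) (uh t)) := by
  set κ := min A 1
  refine ⟨κ, κ / 2, 1 / 2, 3 / 2, by positivity, by positivity, by norm_num, by norm_num, ?_⟩
  intro ε ξ hε a ha nh uh hn hu
  have hκB : κ ≤ A + 1 / a :=
    (min_le_left A 1).trans (le_add_of_nonneg_right (by rw [ha]; positivity))
  refine ⟨fun t ht => ?_, fun t _ => ?_⟩
  · have hdecay := le_exp_neg_mul_of_hasDerivAt (fun s hs => hasDerivAt_linE (hn s hs) (hu s hs))
      (fun s _ => linEDeriv_le (by positivity) (min_le_right A 1) hκB (nh s) (uh s)) ht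
    convert hdecay using 3
    ring
  · obtain ⟨hlower, hupper⟩ :=
      abs_le.1 (abs_linE_sub_linG_le (ξ := ξ) (by positivity) (min_le_right A 1) hκB (nh t) (uh t))
    constructor <;> linarith
end

section
/- If f : ℝ → ℝ is continuously differentiable, f and f′ are square integrable on ℝ, and f(x) → 0 as |x| → ∞, then ∫_ℝ f(x)⁴ dx ≤ 2 · ‖f‖_{L²(ℝ)}³ · ‖f′‖_{L²(ℝ)}. -/
open MeasureTheory Filter Set

/-! Since `f → 0` at `-∞`, `f(x)² = ∫_{-∞}^x 2 f f' ≤ 2 ∫ |f f'| ≤ 2 ‖f‖₂ ‖f'‖₂` by Cauchy–Schwarz,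
and `∫ f⁴ ≤ (sup f²) · ∫ f²`. -/

section

variable {α : Type*} [MeasurableSpace α] {μ : Measure α}

theorem integral_abs_mul_le_L2_mul_L2 {f g : α → ℝ} (hf : MemLp f 2 μ)
    (hg : MemLp g 2 μ) :
    ∫ x, |f x * g x| ∂μ ≤
      (∫ x, f x ^ 2 ∂μ) ^ (1 / 2 : ℝ) * (∫ x, g x ^ 2 ∂μ) ^ (1 / 2 : ℝ) := by
  have h2 : ENNReal.ofReal 2 = 2 := by norm_num
  have := integral_mul_norm_le_Lp_mul_Lq Real.HolderConjugate.two_two (h2 ▸ hf) (h2 ▸ hg)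
  simpa [abs_mul, Real.rpow_two] using this

theorem integral_pow_four_le_mul_integral_sq {f : α → ℝ} {M : ℝ}
    (hf : Integrable (fun x => f x ^ 2) μ) (hM : ∀ x, f x ^ 2 ≤ M) :
    ∫ x, f x ^ 4 ∂μ ≤ M * ∫ x, f x ^ 2 ∂μ := by
  rw [← integral_const_mul]
  refine integral_mono_of_nonneg (.of_forall fun x => by positivity) (hf.const_mul M)
    (.of_forall fun x => ?_)
  calc f x ^ 4 = f x ^ 2 * f x ^ 2 := by ring
    _ ≤ M * f x ^ 2 := mul_le_mul_of_nonneg_right (hM x) (sq_nonneg _)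

end

theorem sq_le_two_mul_integral_abs_mul_deriv {f : ℝ → ℝ} (hf : Differentiable ℝ f)
    (hint : Integrable (fun x => f x * deriv f x)) (hbot : Tendsto f atBot (nhds 0)) (x : ℝ) :
    f x ^ 2 ≤ 2 * ∫ t, |f t * deriv f t| := by
  have hsq : ∫ t in Iic x, 2 * (f t * deriv f t) = f x ^ 2 := by
    have := integral_Iic_of_hasDerivAt_of_tendsto' (f := fun t => f t ^ 2) (a := x) (m := 0)
      (fun t _ => by simpa [mul_comm, mul_assoc, mul_left_comm] using (hf t).hasDerivAt.fun_pow 2)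
      (hint.const_mul 2).integrableOn (by simpa using hbot.pow 2)
    simpa using this
  calc f x ^ 2 ≤ ∫ t in Iic x, |2 * (f t * deriv f t)| := by
        rw [← hsq]; exact (le_abs_self _).trans abs_integral_le_integral_abs
    _ ≤ ∫ t, |2 * (f t * deriv f t)| :=
        setIntegral_le_integral (hint.const_mul 2).abs (.of_forall fun _ => abs_nonneg _)
    _ = 2 * ∫ t, |f t * deriv f t| := by simp [abs_mul, integral_const_mul]

theorem integral_pow_four_le_general (f : ℝ → ℝ)
    (hf : ContDiff ℝ 1 f)
    (hf2 : Integrable (fun x => (f x) ^ 2))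
    (hdf2 : Integrable (fun x => (deriv f x) ^ 2))
    (hbot : Tendsto f atBot (nhds 0)) :
    (∫ x, (f x) ^ 4) ≤
      2 * (∫ x, (f x) ^ 2) ^ ((3 : ℝ) / 2) * (∫ x, (deriv f x) ^ 2) ^ ((1 : ℝ) / 2) := by
  have hf_diff : Differentiable ℝ f := hf.differentiable one_ne_zero
  have hf_L2 : MemLp f 2 := (memLp_two_iff_integrable_sq hf.continuous.aestronglyMeasurable).2 hf2
  have hdf_L2 : MemLp (deriv f) 2 :=
    (memLp_two_iff_integrable_sq (measurable_deriv f).aestronglyMeasurable).2 hdf2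
  set A := ∫ x, f x ^ 2
  set B := ∫ x, deriv f x ^ 2
  have hA : 0 ≤ A := integral_nonneg fun x => sq_nonneg _
  calc ∫ x, f x ^ 4 ≤ (2 * ∫ t, |f t * deriv f t|) * A :=
        integral_pow_four_le_mul_integral_sq hf2
          (sq_le_two_mul_integral_abs_mul_deriv hf_diff (hf_L2.integrable_mul hdf_L2) hbot)
    _ ≤ 2 * (A ^ (1 / 2 : ℝ) * B ^ (1 / 2 : ℝ)) * A := by
        gcongr; exact integral_abs_mul_le_L2_mul_L2 hf_L2 hdf_L2
    _ = 2 * A ^ ((3 : ℝ) / 2) * B ^ ((1 : ℝ) / 2) := by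
        rw [show (3 : ℝ) / 2 = 1 / 2 + 1 by norm_num, Real.rpow_add_of_nonneg hA (by norm_num)
          zero_le_one, Real.rpow_one]
        ring

/-- If `f` is continuously differentiable, `f` and `f'` are square integrable on `ℝ` and
`f` vanishes at infinity, then `∫ f⁴ ≤ 2 ‖f‖_{L²}³ ‖f'‖_{L²}`. -/
theorem integral_pow_four_le (f : ℝ → ℝ)
    (hf : ContDiff ℝ 1 f)
    (hf2 : Integrable (fun x => (f x) ^ 2))
    (hdf2 : Integrable (fun x => (deriv f x) ^ 2))
    (htop : Tendsto f atTop (nhds 0))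
    (hbot : Tendsto f atBot (nhds 0)) :
    (∫ x, (f x) ^ 4) ≤
      2 * (∫ x, (f x) ^ 2) ^ ((3 : ℝ) / 2) * (∫ x, (deriv f x) ^ 2) ^ ((1 : ℝ) / 2) :=
  integral_pow_four_le_general f hf hf2 hdf2 hbot
end
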